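/- arXiv:2402.03157 — 3 statements merged into one kernel-verified Lean document; each statement's English description precedes it below -/
import Mathlib

section
/- Suppose for each player i ∈ {1,…,N} there is a C¹ costate function ψ_i : [0,T] → ℝⁿ, a continuous control profile u* and a C¹ trajectory x* such that for all t ∈ [0,T]: ẋ*(t) = f(x*(t),u*(t)) with x*(0)=x₀; ∇_{u_i} H_i(ψ_i(t), x*(t), u*(t)) = 0; ψ̇_i(t) = −∇_x H_i(ψ_i(t), x*(t), u*(t)); and ψ_i(T) = ∇_x h_i(x*(T)). Assume additionally that each h_i is convex and that for each i and each t ∈ [0,T] the map (x, u_i) ↦ H_i(ψ_i(t), x, (u_i, u*_{¬i}(t))) is convex on ℝⁿ × ℝ^{m_i}. Then u* is an open-loop Nash equilibrium of the differential game. -/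
/-! Fix a player `i` and a competing pair `(y, uᵢ)`. Convexity of the Hamiltonian in `(x, uᵢ)` at
`(x*, u*ᵢ)`, with stationarity in `uᵢ` and the costate equation for the `x`-gradient, gives
pointwise `gᵢ(x*, u*ᵢ) ≤ gᵢ(y, uᵢ) + d/dt ⟪ψᵢ, y - x*⟫` once both Hamiltonians are evaluated
along their dynamics. Integrating over `[0, T]`, the boundary term vanishes at `0` because both
trajectories start at `x₀`, and at `T` it is absorbed by convexity of `hᵢ` and transversality. -/

open scoped RealInnerProductSpace
open Set

section FirstOrder

variable {E : Type*} [NormedAddCommGroup E]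

theorem ConvexOn.add_fderiv_sub_le [NormedSpace ℝ E] {s : Set E} {φ : E → ℝ}
    (hφ : ConvexOn ℝ s φ) {x z : E} (hx : x ∈ s) (hz : z ∈ s) {L : E →L[ℝ] ℝ}
    (hL : HasFDerivAt φ L x) : φ x + L (z - x) ≤ φ z := by
  let c : ℝ →ᵃ[ℝ] E := AffineMap.lineMap x z
  have hc : (c : ℝ → E) = fun r => r • (z - x) + x :=
    funext fun r => AffineMap.lineMap_apply_module' x z r
  have hline : HasDerivAt (φ ∘ c) (L (z - x)) 0 := by
    have hcurve : HasDerivAt c (z - x) 0 := by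
      simpa [hc] using ((hasDerivAt_id (0 : ℝ)).smul_const (z - x)).add_const x
    exact hL.comp_hasDerivAt_of_eq 0 hcurve (by simp [hc])
  have := (hφ.comp_affineMap c).le_slope_of_hasDerivAt (x := 0) (y := 1)
    (by simpa [hc] using hx) (by simpa [hc] using hz) zero_lt_one hline
  simp only [slope_def_field, hc, Function.comp_apply, zero_smul, zero_add, one_smul,
    sub_add_cancel, sub_zero, div_one] at this
  linarith [map_sub L z x]

theorem ConvexOn.add_inner_gradient_sub_le [InnerProductSpace ℝ E] [CompleteSpace E] {s : Set E}
    {φ : E → ℝ} (hφ : ConvexOn ℝ s φ) {x z : E} (hx : x ∈ s) (hz : z ∈ s)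
    (hd : DifferentiableAt ℝ φ x) : φ x + ⟪gradient φ x, z - x⟫ ≤ φ z := by
  simpa only [inner_gradient_left] using hφ.add_fderiv_sub_le hx hz hd.hasFDerivAt

theorem ConvexOn.add_inner_gradient_fst_le {U : Type*} [InnerProductSpace ℝ E] [CompleteSpace E]
    [NormedAddCommGroup U] [InnerProductSpace ℝ U] [CompleteSpace U] {s : Set (E × U)}
    {F : E × U → ℝ} (hF : ConvexOn ℝ s F) {p z : E × U} (hp : p ∈ s) (hz : z ∈ s)
    (hd : DifferentiableAt ℝ F p) (hu : gradient (fun v => F (p.1, v)) p.2 = 0) :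
    F p + ⟪gradient (fun x => F (x, p.2)) p.1, z.1 - p.1⟫ ≤ F z := by
  set L := fderiv ℝ F p
  have hfst : fderiv ℝ (fun x => F (x, p.2)) p.1 = L.comp (.inl ℝ E U) :=
    (hd.hasFDerivAt.comp p.1 (hasFDerivAt_prodMk_left p.1 p.2)).fderiv
  have hsnd : fderiv ℝ (fun v => F (p.1, v)) p.2 = L.comp (.inr ℝ E U) :=
    (hd.hasFDerivAt.comp p.2 (hasFDerivAt_prodMk_right p.1 p.2)).fderiv
  have hsplit : L (z - p) = L (z.1 - p.1, 0) + L (0, z.2 - p.2) := by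
    rw [← map_add]; congr 1; ext <;> simp
  have hL0 : L (0, z.2 - p.2) = 0 := by
    change L.comp (.inr ℝ E U) (z.2 - p.2) = 0
    rw [← hsnd, ← inner_gradient_left, hu, inner_zero_left]
  have := hF.add_fderiv_sub_le hp hz hd.hasFDerivAt
  rw [hsplit, hL0, add_zero] at this
  rwa [inner_gradient_left, hfst]

end FirstOrder

section Integration

variable {E : Type*} [NormedAddCommGroup E] [InnerProductSpace ℝ E]

theorem integral_deriv_inner_add_inner_deriv_eq_sub {u v : ℝ → E} (hu : ContDiff ℝ 1 u)
    (hv : ContDiff ℝ 1 v) (a b : ℝ) :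
    ∫ t in a..b, (⟪deriv u t, v t⟫ + ⟪u t, deriv v t⟫) = ⟪u b, v b⟫ - ⟪u a, v a⟫ := by
  have hu' := hu.differentiable one_ne_zero
  have hv' := hv.differentiable one_ne_zero
  refine intervalIntegral.integral_eq_sub_of_hasDerivAt (f := fun t => ⟪u t, v t⟫) (fun t _ => ?_) ?_
  · simpa only [add_comm] using (hu' t).hasDerivAt.inner ℝ (hv' t).hasDerivAt
  · exact (((hu.continuous_deriv le_rfl).inner hv.continuous).add
      (hu.continuous.inner (hv.continuous_deriv le_rfl))).intervalIntegrable a b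

theorem add_integral_le_add_integral_of_le_add_inner_deriv {T : ℝ} (hT : 0 ≤ T) {a b : ℝ → ℝ}
    (ha : Continuous a) (hb : Continuous b) {ψ e : ℝ → E} (hψ : ContDiff ℝ 1 ψ)
    (he : ContDiff ℝ 1 e) (he0 : e 0 = 0) {c d : ℝ} (hterm : c + ⟪ψ T, e T⟫ ≤ d)
    (hle : ∀ t ∈ Icc 0 T, a t ≤ b t + (⟪deriv ψ t, e t⟫ + ⟪ψ t, deriv e t⟫)) :
    c + ∫ t in 0..T, a t ≤ d + ∫ t in 0..T, b t := by
  have hcont : Continuous fun t => ⟪deriv ψ t, e t⟫ + ⟪ψ t, deriv e t⟫ :=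
    ((hψ.continuous_deriv le_rfl).inner he.continuous).add
      (hψ.continuous.inner (he.continuous_deriv le_rfl))
  have hint : ∫ t in 0..T, a t ≤ ∫ t in 0..T, (b t + (⟪deriv ψ t, e t⟫ + ⟪ψ t, deriv e t⟫)) :=
    intervalIntegral.integral_mono_on hT (ha.intervalIntegrable 0 T)
      ((hb.add hcont).intervalIntegrable 0 T) hle
  rw [intervalIntegral.integral_add (hb.intervalIntegrable 0 T) (hcont.intervalIntegrable 0 T),
    integral_deriv_inner_add_inner_deriv_eq_sub hψ he, he0, inner_zero_right, sub_zero] at hint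
  linarith

end Integration

theorem statement_1_general
    (n N : ℕ) (m : Fin N → ℕ) (T : ℝ) (hT : 0 < T)
    (x₀ : EuclideanSpace ℝ (Fin n))
    -- input-affine dynamics: f(x,u) = fx(x) + ∑ i, G i x (u i)
    (fx : EuclideanSpace ℝ (Fin n) → EuclideanSpace ℝ (Fin n))
    (hfx : ContDiff ℝ 1 fx)
    (G : (i : Fin N) → EuclideanSpace ℝ (Fin n) →
      (EuclideanSpace ℝ (Fin (m i)) →L[ℝ] EuclideanSpace ℝ (Fin n)))
    (hG : ∀ i, ContDiff ℝ 1 (G i))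
    (f : EuclideanSpace ℝ (Fin n) → ((j : Fin N) → EuclideanSpace ℝ (Fin (m j))) →
      EuclideanSpace ℝ (Fin n))
    (hf : ∀ x u, f x u = fx x + ∑ i, G i x (u i))
    -- running costs g i (x,uᵢ) = q i x + uᵢᵀ Rᵢ uᵢ with Rᵢ symmetric positive definite
    (q : Fin N → EuclideanSpace ℝ (Fin n) → ℝ) (hq : ∀ i, ContDiff ℝ 1 (q i))
    (R : (i : Fin N) →
      (EuclideanSpace ℝ (Fin (m i)) →L[ℝ] EuclideanSpace ℝ (Fin (m i))))
    (g : (i : Fin N) → EuclideanSpace ℝ (Fin n) → EuclideanSpace ℝ (Fin (m i)) → ℝ)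
    (hg : ∀ i x v, g i x v = q i x + ⟪v, R i v⟫)
    -- terminal costs
    (h : Fin N → EuclideanSpace ℝ (Fin n) → ℝ) (hh : ∀ i, ContDiff ℝ 1 (h i))
    -- total cost of player i along a state trajectory and a control profile
    (J : (i : Fin N) → (ℝ → EuclideanSpace ℝ (Fin n)) →
      ((j : Fin N) → ℝ → EuclideanSpace ℝ (Fin (m j))) → ℝ)
    (hJ : ∀ i x u, J i x u = h i (x T) + ∫ t in (0:ℝ)..T, g i (x t) (u i t))
    -- Hamiltonians
    (H : (i : Fin N) → EuclideanSpace ℝ (Fin n) → EuclideanSpace ℝ (Fin n) →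
      ((j : Fin N) → EuclideanSpace ℝ (Fin (m j))) → ℝ)
    (hH : ∀ i ψ x u, H i ψ x u = g i x (u i) + ⟪ψ, f x u⟫)
    -- candidate equilibrium: continuous controls and a C¹ state trajectory
    (ustar : (j : Fin N) → ℝ → EuclideanSpace ℝ (Fin (m j)))
    (hustar : ∀ j, Continuous (ustar j))
    (xstar : ℝ → EuclideanSpace ℝ (Fin n)) (hxstar : ContDiff ℝ 1 xstar)
    (hx0 : xstar 0 = x₀)
    (hdyn : ∀ t ∈ Icc (0:ℝ) T, deriv xstar t = f (xstar t) (fun j => ustar j t))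
    -- C¹ costates satisfying the minimum-principle conditions
    (ψ : (i : Fin N) → ℝ → EuclideanSpace ℝ (Fin n))
    (hψ : ∀ i, ContDiff ℝ 1 (ψ i))
    (hstat : ∀ i, ∀ t ∈ Icc (0:ℝ) T,
      gradient (fun v => H i (ψ i t) (xstar t) (Function.update (fun j => ustar j t) i v))
        (ustar i t) = 0)
    (hcostate : ∀ i, ∀ t ∈ Icc (0:ℝ) T,
      deriv (ψ i) t = - gradient (fun y => H i (ψ i t) y (fun j => ustar j t)) (xstar t))
    (htrans : ∀ i, ψ i T = gradient (h i) (xstar T))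
    -- convexity assumptions
    (hconv_h : ∀ i, ConvexOn ℝ Set.univ (h i))
    (hconv_H : ∀ i, ∀ t ∈ Icc (0:ℝ) T,
      ConvexOn ℝ Set.univ
        (fun p : EuclideanSpace ℝ (Fin n) × EuclideanSpace ℝ (Fin (m i)) =>
          H i (ψ i t) p.1 (Function.update (fun j => ustar j t) i p.2))) :
    -- conclusion: u* is an open-loop Nash equilibrium
    ∀ i : Fin N, ∀ ui : ℝ → EuclideanSpace ℝ (Fin (m i)), Continuous ui →
      ∀ y : ℝ → EuclideanSpace ℝ (Fin n), ContDiff ℝ 1 y → y 0 = x₀ →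
      (∀ t ∈ Icc (0:ℝ) T,
        deriv y t = f (y t) (Function.update (fun j => ustar j t) i (ui t))) →
      J i xstar ustar ≤ J i y (Function.update ustar i ui) := by
  intro i ui hui y hy hy0 hydyn
  have hHdiff : ∀ t, Differentiable ℝ
      (fun p : EuclideanSpace ℝ (Fin n) × EuclideanSpace ℝ (Fin (m i)) =>
        H i (ψ i t) p.1 (Function.update (fun j => ustar j t) i p.2)) := by
    intro t
    have hupd : Differentiable ℝ (Function.update (fun j => ustar j t) i) :=
      fun v => (hasFDerivAt_update (𝕜 := ℝ) (fun j => ustar j t) v).differentiableAt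
    simp only [hH, hg, hf, Function.update_self]
    refine ((Differentiable.add ?_ (differentiable_snd.inner ℝ ?_)).add
      ((differentiable_const _).inner ℝ ?_)) <;> fun_prop (disch := norm_num)
  have hrun : ∀ (x : ℝ → EuclideanSpace ℝ (Fin n)) (u : ℝ → EuclideanSpace ℝ (Fin (m i))),
      Continuous x → Continuous u → Continuous fun t => g i (x t) (u t) := by
    intro x u hx hu
    simp only [hg]
    fun_prop
  have hpoint : ∀ t ∈ Icc (0:ℝ) T, g i (xstar t) (ustar i t) ≤ g i (y t) (ui t) +
      (⟪deriv (ψ i) t, (y - xstar) t⟫ + ⟪ψ i t, deriv (y - xstar) t⟫) := by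
    intro t ht
    have key := (hconv_H i t ht).add_inner_gradient_fst_le (p := (xstar t, ustar i t))
      (z := (y t, ui t)) trivial trivial (hHdiff t _) (hstat i t ht)
    have hgrad : gradient (fun x => H i (ψ i t) x (fun j => ustar j t)) (xstar t) =
        -deriv (ψ i) t := by
      rw [hcostate i t ht, neg_neg]
    simp only [Function.update_eq_self] at key
    rw [hgrad, hH, hH, ← hdyn t ht, Function.update_self, ← hydyn t ht, inner_neg_left] at key
    rw [Pi.sub_apply, deriv_sub (hy.differentiable one_ne_zero t)
      (hxstar.differentiable one_ne_zero t), inner_sub_right (ψ i t)]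
    linarith
  have hterm : h i (xstar T) + ⟪ψ i T, (y - xstar) T⟫ ≤ h i (y T) := by
    rw [htrans i]
    exact (hconv_h i).add_inner_gradient_sub_le trivial trivial
      ((hh i).differentiable one_ne_zero _)
  rw [hJ, hJ, Function.update_self]
  exact add_integral_le_add_integral_of_le_add_inner_deriv hT.le
    (hrun _ _ hxstar.continuous (hustar i)) (hrun _ _ hy.continuous hui) (hψ i) (hy.sub hxstar)
    (by simp [hy0, hx0]) hterm hpoint

theorem statement_1
    (n N : ℕ) (m : Fin N → ℕ) (T : ℝ) (hT : 0 < T)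
    (x₀ : EuclideanSpace ℝ (Fin n))
    -- input-affine dynamics: f(x,u) = fx(x) + ∑ i, G i x (u i)
    (fx : EuclideanSpace ℝ (Fin n) → EuclideanSpace ℝ (Fin n))
    (hfx : ContDiff ℝ 1 fx)
    (G : (i : Fin N) → EuclideanSpace ℝ (Fin n) →
      (EuclideanSpace ℝ (Fin (m i)) →L[ℝ] EuclideanSpace ℝ (Fin n)))
    (hG : ∀ i, ContDiff ℝ 1 (G i))
    (f : EuclideanSpace ℝ (Fin n) → ((j : Fin N) → EuclideanSpace ℝ (Fin (m j))) →
      EuclideanSpace ℝ (Fin n))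
    (hf : ∀ x u, f x u = fx x + ∑ i, G i x (u i))
    -- running costs g i (x,uᵢ) = q i x + uᵢᵀ Rᵢ uᵢ with Rᵢ symmetric positive definite
    (q : Fin N → EuclideanSpace ℝ (Fin n) → ℝ) (hq : ∀ i, ContDiff ℝ 1 (q i))
    (R : (i : Fin N) →
      (EuclideanSpace ℝ (Fin (m i)) →L[ℝ] EuclideanSpace ℝ (Fin (m i))))
    (hRsymm : ∀ i v w, ⟪R i v, w⟫ = ⟪v, R i w⟫)
    (hRpos : ∀ i v, v ≠ 0 → (0:ℝ) < ⟪v, R i v⟫)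
    (g : (i : Fin N) → EuclideanSpace ℝ (Fin n) → EuclideanSpace ℝ (Fin (m i)) → ℝ)
    (hg : ∀ i x v, g i x v = q i x + ⟪v, R i v⟫)
    -- terminal costs
    (h : Fin N → EuclideanSpace ℝ (Fin n) → ℝ) (hh : ∀ i, ContDiff ℝ 1 (h i))
    -- total cost of player i along a state trajectory and a control profile
    (J : (i : Fin N) → (ℝ → EuclideanSpace ℝ (Fin n)) →
      ((j : Fin N) → ℝ → EuclideanSpace ℝ (Fin (m j))) → ℝ)
    (hJ : ∀ i x u, J i x u = h i (x T) + ∫ t in (0:ℝ)..T, g i (x t) (u i t))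
    -- Hamiltonians
    (H : (i : Fin N) → EuclideanSpace ℝ (Fin n) → EuclideanSpace ℝ (Fin n) →
      ((j : Fin N) → EuclideanSpace ℝ (Fin (m j))) → ℝ)
    (hH : ∀ i ψ x u, H i ψ x u = g i x (u i) + ⟪ψ, f x u⟫)
    -- candidate equilibrium: continuous controls and a C¹ state trajectory
    (ustar : (j : Fin N) → ℝ → EuclideanSpace ℝ (Fin (m j)))
    (hustar : ∀ j, Continuous (ustar j))
    (xstar : ℝ → EuclideanSpace ℝ (Fin n)) (hxstar : ContDiff ℝ 1 xstar)
    (hx0 : xstar 0 = x₀)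
    (hdyn : ∀ t ∈ Icc (0:ℝ) T, deriv xstar t = f (xstar t) (fun j => ustar j t))
    -- C¹ costates satisfying the minimum-principle conditions
    (ψ : (i : Fin N) → ℝ → EuclideanSpace ℝ (Fin n))
    (hψ : ∀ i, ContDiff ℝ 1 (ψ i))
    (hstat : ∀ i, ∀ t ∈ Icc (0:ℝ) T,
      gradient (fun v => H i (ψ i t) (xstar t) (Function.update (fun j => ustar j t) i v))
        (ustar i t) = 0)
    (hcostate : ∀ i, ∀ t ∈ Icc (0:ℝ) T,
      deriv (ψ i) t = - gradient (fun y => H i (ψ i t) y (fun j => ustar j t)) (xstar t))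
    (htrans : ∀ i, ψ i T = gradient (h i) (xstar T))
    -- convexity assumptions
    (hconv_h : ∀ i, ConvexOn ℝ Set.univ (h i))
    (hconv_H : ∀ i, ∀ t ∈ Icc (0:ℝ) T,
      ConvexOn ℝ Set.univ
        (fun p : EuclideanSpace ℝ (Fin n) × EuclideanSpace ℝ (Fin (m i)) =>
          H i (ψ i t) p.1 (Function.update (fun j => ustar j t) i p.2))) :
    -- conclusion: u* is an open-loop Nash equilibrium
    ∀ i : Fin N, ∀ ui : ℝ → EuclideanSpace ℝ (Fin (m i)), Continuous ui →
      ∀ y : ℝ → EuclideanSpace ℝ (Fin n), ContDiff ℝ 1 y → y 0 = x₀ →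
      (∀ t ∈ Icc (0:ℝ) T,
        deriv y t = f (y t) (Function.update (fun j => ustar j t) i (ui t))) →
      J i xstar ustar ≤ J i y (Function.update ustar i ui) :=
  statement_1_general n N m T hT x₀ fx hfx G hG f hf q hq R g hg h hh J hJ H hH ustar hustar xstar
    hxstar hx0 hdyn ψ hψ hstat hcostate htrans hconv_h hconv_H
end

section
/- Assume: (a) the observed trajectories (x̃, ũ) constitute an open-loop Nash equilibrium of the differential game with running costs θ_i*ᵀφ_i(x,u) for parameters θ_i* ∈ ℝ^{M_i} with first component θ*_{i,1} > 0, and ψ_i* are corresponding C¹ costates satisfying, for all t ∈ [0,T], ∇_{u_i}H_i(θ_i*; ψ_i*(t), x̃(t), ũ(t)) = 0 and ψ̇_i*(t) = −∇_x H_i(θ_i*; ψ_i*(t), x̃(t), ũ(t)); (b) P_i(0) is the value at 0 of the C¹ solution of the Riccati equation Ṗ_i = (P_iB_i + N_i)(P_iB_i + N_i)ᵀ − F_iᵀF_i with P_i(T) = 0, and P̄_i denotes P_i(0) with its first row and first column deleted; (c) for each i, either P̄_i has full rank M_i + n − 1, or every v ∈ ℝ^{M_i+n−1} with P̄_i v =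 0 has its first M_i − 1 components equal to zero. Then for each i, every minimizer α̂_i = (θ̂_i, ψ̂_{i,0}) of α ↦ αᵀP_i(0)α over {α ∈ ℝ^{M_i+n} : α₁ = 1} satisfies θ̂_i = c_i θ_i* for some c_i > 0; consequently (x̃, ũ) is also an open-loop Nash equilibrium of the game with running costs θ̂_iᵀφ_i, i.e. the trajectory error of θ̂ = (θ̂_1,…,θ̂_N) is zero. -/
open scoped RealInnerProductSpace
open Set Matrix

noncomputable section

/-!
Along the equilibrium, `v(t) = (θ*, ψ*(t))` satisfies `v' = -B Nᵀ v` (costate equation) and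
`F v = (Nᵀ v, 0)` (stationarity). For the Riccati solution `P` these give
`(P v)' = (P B + N) Bᵀ (P v)`, a linear equation whose solution vanishes at `T`, hence
`P(0) v(0) = 0`. A minimizer `α̂` of `αᵀ P(0) α` on `{α₁ = 1}` has `(P(0) α̂)_j = 0` for `j ≠ 1`,
so `α̂ - v(0) / θ*₁` is a kernel vector of `P̄`, whose `θ`-part the rank condition kills. Finally,
multiplying every cost by a positive constant does not change the Nash equilibria.
-/

theorem eqOn_zero_of_hasDerivWithinAt_clm_of_right_eq_zero {E : Type*} [NormedAddCommGroup E]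
    [NormedSpace ℝ E] {a b : ℝ} {K : ℝ → E →L[ℝ] E} (hK : ContinuousOn K (Icc a b))
    {y : ℝ → E} (hy : ∀ t ∈ Icc a b, HasDerivWithinAt y (K t (y t)) (Icc a b) t)
    (hb : y b = 0) : EqOn y 0 (Icc a b) := by
  obtain ⟨C, hC⟩ := isCompact_Icc.exists_bound_of_continuousOn hK
  have hlip : ∀ t ∈ Ioc a b, LipschitzOnWith C.toNNReal (K t) univ := fun t ht => by
    have hKt := Real.toNNReal_le_toNNReal (hC t (Ioc_subset_Icc_self ht))
    rw [norm_toNNReal] at hKt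
    exact ((K t).lipschitz.weaken hKt).lipschitzOnWith
  exact ODE_solution_unique_of_mem_Icc_left hlip (fun t ht => (hy t ht).continuousWithinAt)
    (fun t ht => (hy t (Ioc_subset_Icc_self ht)).mono_of_mem_nhdsWithin
      (Icc_mem_nhdsLE_of_mem ht))
    (fun _ _ => mem_univ _) continuousOn_const
    (fun t _ => by rw [Pi.zero_apply, map_zero]; exact hasDerivWithinAt_const t _ 0)
    (fun _ _ => mem_univ _) hb

theorem ContinuousOn.matrix_toLin'_toContinuousLinearMap {ι : Type*} [Fintype ι] [DecidableEq ι]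
    {K : ℝ → Matrix ι ι ℝ} {s : Set ℝ} (hK : ContinuousOn K s) :
    ContinuousOn (fun t => LinearMap.toContinuousLinearMap (Matrix.toLin' (K t))) s :=
  ((LinearMap.toContinuousLinearMap.toLinearMap ∘ₗ Matrix.toLin'.toLinearMap :
    Matrix ι ι ℝ →ₗ[ℝ] (ι → ℝ) →L[ℝ] ι → ℝ).continuous_of_finiteDimensional).comp_continuousOn hK

theorem Continuous.matrix_fromRows {X R m₁ m₂ n : Type*} [TopologicalSpace X]
    [TopologicalSpace R] {A₁ : X → Matrix m₁ n R} {A₂ : X → Matrix m₂ n R} (hA₁ : Continuous A₁)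
    (hA₂ : Continuous A₂) : Continuous fun x => fromRows (A₁ x) (A₂ x) :=
  continuous_matrix fun i j => by
    rcases i with i | i
    exacts [hA₁.matrix_elem i j, hA₂.matrix_elem i j]

theorem HasDerivWithinAt.matrix_mulVec {ι κ : Type*} [Fintype κ] {P : ℝ → Matrix ι κ ℝ}
    {P' : Matrix ι κ ℝ} {v : ℝ → κ → ℝ} {v' : κ → ℝ} {s : Set ℝ} {t : ℝ}
    (hP : ∀ i j, HasDerivWithinAt (fun r => P r i j) (P' i j) s t)
    (hv : HasDerivWithinAt v v' s t) :
    HasDerivWithinAt (fun r => P r *ᵥ v r) (P' *ᵥ v t + P t *ᵥ v') s t := by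
  rw [hasDerivWithinAt_pi] at hv ⊢
  intro i
  simpa only [mulVec, dotProduct, Pi.add_apply, ← Finset.sum_add_distrib] using
    HasDerivWithinAt.fun_sum fun j _ => (hP i j).fun_mul (hv j)

theorem Matrix.isSymm_of_hasDerivWithinAt {ι : Type*} {a b : ℝ} {P P' : ℝ → Matrix ι ι ℝ}
    (hP : ∀ t ∈ Icc a b, ∀ i j, HasDerivWithinAt (fun s => P s i j) (P' t i j) (Icc a b) t)
    (hP' : ∀ t ∈ Icc a b, (P' t).IsSymm) (hPb : (P b).IsSymm) :
    ∀ t ∈ Icc a b, (P t).IsSymm := by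
  intro t ht
  ext i j
  have hzero := eqOn_zero_of_hasDerivWithinAt_clm_of_right_eq_zero (K := fun _ => 0)
    continuousOn_const (y := fun s => P s j i - P s i j) (fun s hs => by
      simpa [← (hP' s hs).apply i j] using (hP s hs j i).fun_sub (hP s hs i j))
    (sub_eq_zero.2 (hPb.apply i j)) ht
  simpa [sub_eq_zero] using hzero

theorem riccati_mulVec_eq {ι κ κ' : Type*} [Fintype ι] [Fintype κ] [Fintype κ']
    {P : Matrix ι ι ℝ} (hP : P.IsSymm) (B N : Matrix ι κ ℝ) (F : Matrix κ' ι ℝ)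
    {v : ι → ℝ} (hF : (Fᵀ * F) *ᵥ v = (N * Nᵀ) *ᵥ v) :
    ((P * B + N) * (P * B + N)ᵀ - Fᵀ * F) *ᵥ v + P *ᵥ (-(B *ᵥ (Nᵀ *ᵥ v)))
      = ((P * B + N) * Bᵀ) *ᵥ (P *ᵥ v) := by
  rw [sub_mulVec, hF, transpose_add, transpose_mul, hP.eq]
  simp only [mulVec_mulVec, ← sub_mulVec, ← add_mulVec, ← neg_mulVec]
  congr 1
  simp only [Matrix.mul_add, Matrix.add_mul, Matrix.mul_assoc, Matrix.mul_neg]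
  abel

section Riccati

variable {ι κ κ' : Type*} [Fintype ι] [Fintype κ] [Fintype κ'] {a b : ℝ}
  {P : ℝ → Matrix ι ι ℝ} {B : Matrix ι κ ℝ} {N : ℝ → Matrix ι κ ℝ} {F : ℝ → Matrix κ' ι ℝ}

theorem riccati_isSymm
    (hP : ∀ t ∈ Icc a b, ∀ i j, HasDerivWithinAt (fun s => P s i j)
      (((P t * B + N t) * (P t * B + N t)ᵀ - (F t)ᵀ * F t) i j) (Icc a b) t)
    (hPb : P b = 0) : ∀ t ∈ Icc a b, (P t).IsSymm :=
  isSymm_of_hasDerivWithinAt hP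
    (fun _ _ => by simp only [IsSymm, transpose_sub, transpose_mul, transpose_transpose])
    (by simp [hPb, IsSymm])

theorem riccati_mulVec_eqOn_zero [DecidableEq ι] {v : ℝ → ι → ℝ}
    (hN : ContinuousOn N (Icc a b))
    (hP : ∀ t ∈ Icc a b, ∀ i j, HasDerivWithinAt (fun s => P s i j)
      (((P t * B + N t) * (P t * B + N t)ᵀ - (F t)ᵀ * F t) i j) (Icc a b) t)
    (hPb : P b = 0)
    (hv : ∀ t ∈ Icc a b, HasDerivWithinAt v (-(B *ᵥ ((N t)ᵀ *ᵥ v t))) (Icc a b) t)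
    (hF : ∀ t ∈ Icc a b, ((F t)ᵀ * F t) *ᵥ v t = (N t * (N t)ᵀ) *ᵥ v t) :
    EqOn (fun t => P t *ᵥ v t) 0 (Icc a b) := by
  have hPc : ContinuousOn P (Icc a b) := by
    rw [continuousOn_iff_continuous_domRestrict]
    exact continuous_matrix fun i j => continuousOn_iff_continuous_domRestrict.1
      fun t ht => (hP t ht i j).continuousWithinAt
  have hK : ContinuousOn (fun t => (P t * B + N t) * Bᵀ) (Icc a b) := by
    rw [continuousOn_iff_continuous_domRestrict] at hPc hN ⊢
    exact ((hPc.matrix_mul continuous_const).add hN).matrix_mul continuous_const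
  refine eqOn_zero_of_hasDerivWithinAt_clm_of_right_eq_zero
    hK.matrix_toLin'_toContinuousLinearMap (fun t ht => ?_) (by simp [hPb])
  have hderiv := HasDerivWithinAt.matrix_mulVec (hP t ht) (hv t ht)
  rwa [riccati_mulVec_eq (riccati_isSymm hP hPb t ht) B (N t) (F t) (hF t ht)] at hderiv

end Riccati

theorem Matrix.dotProduct_mulVec_eq_zero_of_isMinOn {ι : Type*} [Fintype ι] {Q : Matrix ι ι ℝ}
    (hQ : Q.IsSymm) {s : Set (ι → ℝ)} {α d : ι → ℝ}
    (hmin : IsMinOn (fun β => β ⬝ᵥ (Q *ᵥ β)) s α) (hd : ∀ r : ℝ, α + r • d ∈ s) :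
    d ⬝ᵥ (Q *ᵥ α) = 0 := by
  have hsymm : α ⬝ᵥ (Q *ᵥ d) = d ⬝ᵥ (Q *ᵥ α) := by
    rw [dotProduct_comm, dotProduct_mulVec, ← mulVec_transpose, hQ.eq]
  have hquad : ∀ r : ℝ,
      0 ≤ d ⬝ᵥ (Q *ᵥ d) * (r * r) + 2 * d ⬝ᵥ (Q *ᵥ α) * r + 0 := fun r => by
    have hle := isMinOn_iff.1 hmin _ (hd r)
    simp only [mulVec_add, mulVec_smul, add_dotProduct, dotProduct_add, smul_dotProduct,
      dotProduct_smul, smul_eq_mul, hsymm] at hle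
    linarith
  have hdiscrim := discrim_le_zero hquad
  rw [discrim] at hdiscrim
  nlinarith

theorem Matrix.apply_eq_of_isMinOn_of_mulVec_eq_zero {ι : Type*} [Fintype ι] [DecidableEq ι]
    {Q : Matrix ι ι ℝ} (hQ : Q.IsSymm) {i₀ : ι} {α α' : ι → ℝ}
    (hmin : IsMinOn (fun β => β ⬝ᵥ (Q *ᵥ β)) {β | β i₀ = 1} α) (hα : α i₀ = 1)
    (hker : Q *ᵥ α' = 0) (hα' : α' i₀ ≠ 0) {i : ι}
    (hi : ∀ w : ι → ℝ, w i₀ = 0 → (∀ j, j ≠ i₀ → (Q *ᵥ w) j = 0) → w i = 0) :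
    α i = (α' i₀)⁻¹ * α' i := by
  have hstationary : ∀ j, j ≠ i₀ → (Q *ᵥ α) j = 0 := fun j hj => by
    simpa using dotProduct_mulVec_eq_zero_of_isMinOn hQ hmin (d := Pi.single j 1)
      fun r => by simp [hα, hj.symm]
  have hw := hi (α - (α' i₀)⁻¹ • α') (by simp [hα, hα'])
    fun j hj => by simp [mulVec_sub, mulVec_smul, hker, hstationary j hj]
  simpa [sub_eq_zero] using hw

theorem Matrix.apply_inl_eq_zero_of_rank_condition {κ κ' : Type*} [Fintype κ] [Fintype κ']
    {Q : Matrix (κ ⊕ κ') (κ ⊕ κ') ℝ} {j₀ : κ}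
    (h : (∀ w, w (Sum.inl j₀) = 0 → (∀ a, a ≠ Sum.inl j₀ → (Q *ᵥ w) a = 0) → w = 0) ∨
      (∀ w, w (Sum.inl j₀) = 0 → (∀ a, a ≠ Sum.inl j₀ → (Q *ᵥ w) a = 0) →
        ∀ j, j ≠ j₀ → w (Sum.inl j) = 0))
    (j : κ) (w : κ ⊕ κ' → ℝ) (hw : w (Sum.inl j₀) = 0)
    (hQw : ∀ a, a ≠ Sum.inl j₀ → (Q *ᵥ w) a = 0) : w (Sum.inl j) = 0 := by
  rcases h with hfull | hpart
  · rw [hfull w hw hQw, Pi.zero_apply]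
  · by_cases hj : j = j₀
    · exact hj ▸ hw
    · exact hpart w hw hQw j hj

theorem Matrix.inner_toEuclideanLin_transpose {ι κ : Type*} [Fintype ι] [DecidableEq ι]
    [Fintype κ] [DecidableEq κ] (A : Matrix κ ι ℝ) (θ : EuclideanSpace ℝ κ)
    (h : EuclideanSpace ℝ ι) : ⟪toEuclideanLin Aᵀ θ, h⟫ = ⟪θ, toEuclideanLin A h⟫ := by
  rw [← conjTranspose_eq_transpose_of_trivial, toEuclideanLin_conjTranspose_eq_adjoint,
    LinearMap.adjoint_inner_left]

theorem HasFDerivAt.hasGradientAt_inner_add_inner {ι κ κ' : Type*} [Fintype ι] [DecidableEq ι]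
    [Fintype κ] [DecidableEq κ] [Fintype κ'] [DecidableEq κ']
    {g : EuclideanSpace ℝ ι → EuclideanSpace ℝ κ} {k : EuclideanSpace ℝ ι → EuclideanSpace ℝ κ'}
    {A : Matrix κ ι ℝ} {C : Matrix κ' ι ℝ} {x : EuclideanSpace ℝ ι}
    (hg : HasFDerivAt g (toEuclideanLin A).toContinuousLinearMap x)
    (hk : HasFDerivAt k (toEuclideanLin C).toContinuousLinearMap x)
    (θ : EuclideanSpace ℝ κ) (ψ : EuclideanSpace ℝ κ') :
    HasGradientAt (fun y => ⟪θ, g y⟫ + ⟪ψ, k y⟫) (toEuclideanLin Aᵀ θ + toEuclideanLin Cᵀ ψ) x := by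
  rw [hasGradientAt_iff_hasFDerivAt]
  refine (((innerSL ℝ θ).hasFDerivAt.comp x hg).add
    ((innerSL ℝ ψ).hasFDerivAt.comp x hk)).congr_fderiv ?_
  ext h
  simp [inner_toEuclideanLin_transpose]

theorem Matrix.fromRows_transpose_mul_fromRows_mulVec {ι κ κ' : Type*} [Fintype ι] [Fintype κ]
    [Fintype κ'] (N : Matrix ι κ ℝ) (U : Matrix κ' ι ℝ) {v : ι → ℝ} (hU : U *ᵥ v = 0) :
    ((fromRows Nᵀ U)ᵀ * fromRows Nᵀ U) *ᵥ v = (N * Nᵀ) *ᵥ v := by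
  rw [transpose_fromRows, fromCols_mul_fromRows, add_mulVec, ← mulVec_mulVec v Uᵀ U, hU,
    mulVec_zero, add_zero, transpose_transpose]

theorem HasDerivAt.hasDerivWithinAt_sumElim_costate {ι κ : Type*} [Fintype ι] [DecidableEq ι]
    [Fintype κ] {θ : κ → ℝ} {ψ : ℝ → EuclideanSpace ℝ ι} {ψ' : EuclideanSpace ℝ ι}
    {A : Matrix κ ι ℝ} {C : Matrix ι ι ℝ} {s : Set ℝ} {t : ℝ} (hψ : HasDerivAt ψ ψ' t)
    (hψ' : WithLp.ofLp ψ' = -(Aᵀ *ᵥ θ + Cᵀ *ᵥ WithLp.ofLp (ψ t))) :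
    HasDerivWithinAt (fun r => Sum.elim θ (WithLp.ofLp (ψ r)))
      (-(fromRows 0 1 *ᵥ ((fromRows A C)ᵀ *ᵥ Sum.elim θ (WithLp.ofLp (ψ t))))) s t := by
  rw [transpose_fromRows, fromCols_mulVec_sumElim, fromRows_mulVec, zero_mulVec, one_mulVec]
  refine HasDerivAt.hasDerivWithinAt (hasDerivAt_pi.2 ?_)
  rintro (j | l)
  · simpa using hasDerivAt_const t (θ j)
  · simpa [hψ', Function.comp_def] using
      (EuclideanSpace.proj l : EuclideanSpace ℝ ι →L[ℝ] ℝ).hasFDerivAt.comp_hasDerivAt t hψ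

theorem statement_4_general
    (n N : ℕ) (m : Fin N → ℕ) (M : Fin N → ℕ) (hM : ∀ i, 0 < M i)
    (T : ℝ) (hT : 0 < T)
    (x₀ : EuclideanSpace ℝ (Fin n))
    (f : EuclideanSpace ℝ (Fin n) → ((j : Fin N) → EuclideanSpace ℝ (Fin (m j))) →
      EuclideanSpace ℝ (Fin n))
    -- basis functions
    (φ : (i : Fin N) → EuclideanSpace ℝ (Fin n) →
      ((j : Fin N) → EuclideanSpace ℝ (Fin (m j))) → EuclideanSpace ℝ (Fin (M i)))
    -- parameterized costs J i θ = ∫₀ᵀ θᵀ φᵢ(x(t),u(t)) dt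
    (J : (i : Fin N) → EuclideanSpace ℝ (Fin (M i)) → (ℝ → EuclideanSpace ℝ (Fin n)) →
      ((j : Fin N) → ℝ → EuclideanSpace ℝ (Fin (m j))) → ℝ)
    (hJ : ∀ i θ x u, J i θ x u = ∫ t in (0:ℝ)..T, ⟪θ, φ i (x t) (fun j => u j t)⟫)
    -- parameterized Hamiltonians
    (H : (i : Fin N) → EuclideanSpace ℝ (Fin (M i)) → EuclideanSpace ℝ (Fin n) →
      EuclideanSpace ℝ (Fin n) → ((j : Fin N) → EuclideanSpace ℝ (Fin (m j))) → ℝ)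
    (hH : ∀ i θ ψ x u, H i θ ψ x u = ⟪θ, φ i x u⟫ + ⟪ψ, f x u⟫)
    -- the observed trajectories
    (ut : (j : Fin N) → ℝ → EuclideanSpace ℝ (Fin (m j)))
    (xt : ℝ → EuclideanSpace ℝ (Fin n))
    -- (a) the observed trajectories are an OLNE for the parameters θ* with θ*_{i,1} > 0
    (θs : (i : Fin N) → EuclideanSpace ℝ (Fin (M i)))
    (hθs1 : ∀ i, 0 < θs i ⟨0, hM i⟩)
    (hOLNE : ∀ i : Fin N, ∀ ui : ℝ → EuclideanSpace ℝ (Fin (m i)), Continuous ui →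
      ∀ y : ℝ → EuclideanSpace ℝ (Fin n), ContDiff ℝ 1 y → y 0 = x₀ →
      (∀ t ∈ Icc (0:ℝ) T,
        deriv y t = f (y t) (Function.update (fun j => ut j t) i (ui t))) →
      J i (θs i) xt ut ≤ J i (θs i) y (Function.update ut i ui))
    -- corresponding C¹ costates satisfying stationarity and the costate equation
    (ψs : (i : Fin N) → ℝ → EuclideanSpace ℝ (Fin n))
    (hψs : ∀ i, ContDiff ℝ 1 (ψs i))
    (hstat : ∀ i, ∀ t ∈ Icc (0:ℝ) T,
      gradient (fun v => H i (θs i) (ψs i t) (xt t) (Function.update (fun j => ut j t) i v))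
        (ut i t) = 0)
    (hcostate : ∀ i, ∀ t ∈ Icc (0:ℝ) T,
      deriv (ψs i) t = - gradient (fun y => H i (θs i) (ψs i t) y (fun j => ut j t)) (xt t))
    -- Jacobian matrices along (x̃(t), ũ(t))
    (Jφx : (i : Fin N) → ℝ → Matrix (Fin (M i)) (Fin n) ℝ)
    (Jfx : ℝ → Matrix (Fin n) (Fin n) ℝ)
    (Jφu : (i : Fin N) → ℝ → Matrix (Fin (M i)) (Fin (m i)) ℝ)
    (Jfu : (i : Fin N) → ℝ → Matrix (Fin n) (Fin (m i)) ℝ)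
    (hJφx : ∀ i t, HasFDerivAt (fun y => φ i y (fun j => ut j t))
      (LinearMap.toContinuousLinearMap (Matrix.toEuclideanLin (Jφx i t))) (xt t))
    (hJfx : ∀ t, HasFDerivAt (fun y => f y (fun j => ut j t))
      (LinearMap.toContinuousLinearMap (Matrix.toEuclideanLin (Jfx t))) (xt t))
    (hJφu : ∀ i t, HasFDerivAt
      (fun v => φ i (xt t) (Function.update (fun j => ut j t) i v))
      (LinearMap.toContinuousLinearMap (Matrix.toEuclideanLin (Jφu i t))) (ut i t))
    (hJfu : ∀ i t, HasFDerivAt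
      (fun v => f (xt t) (Function.update (fun j => ut j t) i v))
      (LinearMap.toContinuousLinearMap (Matrix.toEuclideanLin (Jfu i t))) (ut i t))
    (hJφxc : ∀ i, Continuous (Jφx i)) (hJfxc : Continuous Jfx)
    -- block matrices Nᵢ(t), Bᵢ, Fᵢ(t)
    (Nq : (i : Fin N) → ℝ → Matrix (Fin (M i) ⊕ Fin n) (Fin n) ℝ)
    (hNq : ∀ i t, Nq i t = Matrix.fromRows (Jφx i t) (Jfx t))
    (B : (i : Fin N) → Matrix (Fin (M i) ⊕ Fin n) (Fin n) ℝ)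
    (hB : ∀ i, B i = Matrix.fromRows 0 1)
    (F : (i : Fin N) → ℝ → Matrix (Fin n ⊕ Fin (m i)) (Fin (M i) ⊕ Fin n) ℝ)
    (hF : ∀ i t, F i t = Matrix.fromRows
      (Matrix.fromCols (Jφx i t)ᵀ (Jfx t)ᵀ)
      (Matrix.fromCols (Jφu i t)ᵀ (Jfu i t)ᵀ))
    -- (b) C¹ solutions of the Riccati differential equation on [0,T] with Pᵢ(T) = 0
    (P : (i : Fin N) → ℝ → Matrix (Fin (M i) ⊕ Fin n) (Fin (M i) ⊕ Fin n) ℝ)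
    (hP : ∀ i, ∀ t ∈ Icc (0:ℝ) T, ∀ a b, HasDerivWithinAt (fun s => P i s a b)
      (((P i t * B i + Nq i t) * (P i t * B i + Nq i t)ᵀ - (F i t)ᵀ * F i t) a b)
      (Icc (0:ℝ) T) t)
    (hPT : ∀ i, P i T = 0)
    -- (c) for each i: either P̄ᵢ has full rank, or every kernel vector of P̄ᵢ has its first
    -- Mᵢ−1 components equal to zero (P̄ᵢ realized via extension by zero at the first index)
    (hrank : ∀ i,
      (∀ v : Fin (M i) ⊕ Fin n → ℝ, v (Sum.inl ⟨0, hM i⟩) = 0 →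
        (∀ a, a ≠ Sum.inl ⟨0, hM i⟩ → (P i 0 *ᵥ v) a = 0) → v = 0) ∨
      (∀ v : Fin (M i) ⊕ Fin n → ℝ, v (Sum.inl ⟨0, hM i⟩) = 0 →
        (∀ a, a ≠ Sum.inl ⟨0, hM i⟩ → (P i 0 *ᵥ v) a = 0) →
        ∀ j : Fin (M i), j ≠ ⟨0, hM i⟩ → v (Sum.inl j) = 0)) :
    -- conclusion
    ∀ (θh : (i : Fin N) → EuclideanSpace ℝ (Fin (M i))) (ψ0 : (i : Fin N) → Fin n → ℝ),
      (∀ i, Sum.elim (fun j => θh i j) (ψ0 i) (Sum.inl ⟨0, hM i⟩) = 1 ∧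
        (∀ β : Fin (M i) ⊕ Fin n → ℝ, β (Sum.inl ⟨0, hM i⟩) = 1 →
          (Sum.elim (fun j => θh i j) (ψ0 i)) ⬝ᵥ
              ((P i 0) *ᵥ (Sum.elim (fun j => θh i j) (ψ0 i))) ≤
            β ⬝ᵥ ((P i 0) *ᵥ β))) →
      -- every minimizer θ̂ᵢ is a positive multiple of θᵢ*
      (∀ i, ∃ c : ℝ, 0 < c ∧ ∀ j : Fin (M i), θh i j = c * θs i j) ∧
      -- and (x̃,ũ) is an OLNE of the game with running costs θ̂ᵢᵀφᵢ (zero trajectory error)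
      (∀ i : Fin N, ∀ ui : ℝ → EuclideanSpace ℝ (Fin (m i)), Continuous ui →
        ∀ y : ℝ → EuclideanSpace ℝ (Fin n), ContDiff ℝ 1 y → y 0 = x₀ →
        (∀ t ∈ Icc (0:ℝ) T,
          deriv y t = f (y t) (Function.update (fun j => ut j t) i (ui t))) →
        J i (θh i) xt ut ≤ J i (θh i) y (Function.update ut i ui)) := by
  intro θh ψ0 hmin
  simp only [hH] at hstat hcostate
  have hscale : ∀ i j, θh i j = (θs i ⟨0, hM i⟩)⁻¹ * θs i j := by
    intro i j
    set v : ℝ → Fin (M i) ⊕ Fin n → ℝ := fun t => Sum.elim (fun j => θs i j) (fun l => ψs i t l)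
    have hv : ∀ t ∈ Icc (0:ℝ) T,
        HasDerivWithinAt v (-(B i *ᵥ ((Nq i t)ᵀ *ᵥ v t))) (Icc 0 T) t := fun t ht => by
      rw [hNq i t, hB i]
      refine ((hψs i).differentiable one_ne_zero t).hasDerivAt.hasDerivWithinAt_sumElim_costate ?_
      rw [hcostate i t ht, ((hJφx i t).hasGradientAt_inner_add_inner (hJfx t) _ _).gradient]
      simp
    have hFv : ∀ t ∈ Icc (0:ℝ) T, ((F i t)ᵀ * F i t) *ᵥ v t = (Nq i t * (Nq i t)ᵀ) *ᵥ v t :=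
      fun t ht => by
        have hgrad := ((hJφu i t).hasGradientAt_inner_add_inner (hJfu i t) (θs i) (ψs i t)).gradient
        rw [hstat i t ht] at hgrad
        rw [hF i t, ← transpose_fromRows, ← hNq i t]
        exact fromRows_transpose_mul_fromRows_mulVec _ _
          (by simpa [v, fromCols_mulVec_sumElim] using congrArg WithLp.ofLp hgrad.symm)
    have hN : Continuous (Nq i) := funext (hNq i) ▸ (hJφxc i).matrix_fromRows hJfxc
    have hker : P i 0 *ᵥ v 0 = 0 :=
      riccati_mulVec_eqOn_zero hN.continuousOn (hP i) (hPT i) hv hFv ⟨le_rfl, hT.le⟩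
    exact apply_eq_of_isMinOn_of_mulVec_eq_zero (riccati_isSymm (hP i) (hPT i) 0 ⟨le_rfl, hT.le⟩)
      (isMinOn_iff.2 (hmin i).2) (hmin i).1 hker (hθs1 i).ne'
      (apply_inl_eq_zero_of_rank_condition (hrank i) j)
  refine ⟨fun i => ⟨_, inv_pos.2 (hθs1 i), hscale i⟩, fun i ui hui y hy hy0 hdy => ?_⟩
  have hθh : θh i = (θs i ⟨0, hM i⟩)⁻¹ • θs i := by ext j; simp [hscale i j]
  simp only [hJ, hθh, inner_smul_left, intervalIntegral.integral_const_mul] at hOLNE ⊢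
  exact mul_le_mul_of_nonneg_left (hOLNE i ui hui y hy hy0 hdy) (by simpa using (hθs1 i).le)

theorem statement_4
    (n N : ℕ) (m : Fin N → ℕ) (M : Fin N → ℕ) (hM : ∀ i, 0 < M i)
    (T : ℝ) (hT : 0 < T)
    (x₀ : EuclideanSpace ℝ (Fin n))
    -- input-affine dynamics f(x,u) = fx(x) + ∑ i, G i x (u i)
    (fx : EuclideanSpace ℝ (Fin n) → EuclideanSpace ℝ (Fin n))
    (hfx : ContDiff ℝ 1 fx)
    (G : (i : Fin N) → EuclideanSpace ℝ (Fin n) →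
      (EuclideanSpace ℝ (Fin (m i)) →L[ℝ] EuclideanSpace ℝ (Fin n)))
    (hG : ∀ i, ContDiff ℝ 1 (G i))
    (f : EuclideanSpace ℝ (Fin n) → ((j : Fin N) → EuclideanSpace ℝ (Fin (m j))) →
      EuclideanSpace ℝ (Fin n))
    (hf : ∀ x u, f x u = fx x + ∑ i, G i x (u i))
    -- basis functions
    (φ : (i : Fin N) → EuclideanSpace ℝ (Fin n) →
      ((j : Fin N) → EuclideanSpace ℝ (Fin (m j))) → EuclideanSpace ℝ (Fin (M i)))
    (hφ : ∀ i, ContDiff ℝ 1 (fun p : EuclideanSpace ℝ (Fin n) ×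
      ((j : Fin N) → EuclideanSpace ℝ (Fin (m j))) => φ i p.1 p.2))
    -- parameterized costs J i θ = ∫₀ᵀ θᵀ φᵢ(x(t),u(t)) dt
    (J : (i : Fin N) → EuclideanSpace ℝ (Fin (M i)) → (ℝ → EuclideanSpace ℝ (Fin n)) →
      ((j : Fin N) → ℝ → EuclideanSpace ℝ (Fin (m j))) → ℝ)
    (hJ : ∀ i θ x u, J i θ x u = ∫ t in (0:ℝ)..T, ⟪θ, φ i (x t) (fun j => u j t)⟫)
    -- parameterized Hamiltonians
    (H : (i : Fin N) → EuclideanSpace ℝ (Fin (M i)) → EuclideanSpace ℝ (Fin n) →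
      EuclideanSpace ℝ (Fin n) → ((j : Fin N) → EuclideanSpace ℝ (Fin (m j))) → ℝ)
    (hH : ∀ i θ ψ x u, H i θ ψ x u = ⟪θ, φ i x u⟫ + ⟪ψ, f x u⟫)
    -- the observed trajectories
    (ut : (j : Fin N) → ℝ → EuclideanSpace ℝ (Fin (m j)))
    (hut : ∀ j, Continuous (ut j))
    (xt : ℝ → EuclideanSpace ℝ (Fin n)) (hxt : ContDiff ℝ 1 xt)
    (hx0 : xt 0 = x₀)
    (hdyn : ∀ t ∈ Icc (0:ℝ) T, deriv xt t = f (xt t) (fun j => ut j t))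
    -- (a) the observed trajectories are an OLNE for the parameters θ* with θ*_{i,1} > 0
    (θs : (i : Fin N) → EuclideanSpace ℝ (Fin (M i)))
    (hθs1 : ∀ i, 0 < θs i ⟨0, hM i⟩)
    (hOLNE : ∀ i : Fin N, ∀ ui : ℝ → EuclideanSpace ℝ (Fin (m i)), Continuous ui →
      ∀ y : ℝ → EuclideanSpace ℝ (Fin n), ContDiff ℝ 1 y → y 0 = x₀ →
      (∀ t ∈ Icc (0:ℝ) T,
        deriv y t = f (y t) (Function.update (fun j => ut j t) i (ui t))) →
      J i (θs i) xt ut ≤ J i (θs i) y (Function.update ut i ui))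
    -- corresponding C¹ costates satisfying stationarity and the costate equation
    (ψs : (i : Fin N) → ℝ → EuclideanSpace ℝ (Fin n))
    (hψs : ∀ i, ContDiff ℝ 1 (ψs i))
    (hstat : ∀ i, ∀ t ∈ Icc (0:ℝ) T,
      gradient (fun v => H i (θs i) (ψs i t) (xt t) (Function.update (fun j => ut j t) i v))
        (ut i t) = 0)
    (hcostate : ∀ i, ∀ t ∈ Icc (0:ℝ) T,
      deriv (ψs i) t = - gradient (fun y => H i (θs i) (ψs i t) y (fun j => ut j t)) (xt t))
    -- Jacobian matrices along (x̃(t), ũ(t))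
    (Jφx : (i : Fin N) → ℝ → Matrix (Fin (M i)) (Fin n) ℝ)
    (Jfx : ℝ → Matrix (Fin n) (Fin n) ℝ)
    (Jφu : (i : Fin N) → ℝ → Matrix (Fin (M i)) (Fin (m i)) ℝ)
    (Jfu : (i : Fin N) → ℝ → Matrix (Fin n) (Fin (m i)) ℝ)
    (hJφx : ∀ i t, HasFDerivAt (fun y => φ i y (fun j => ut j t))
      (LinearMap.toContinuousLinearMap (Matrix.toEuclideanLin (Jφx i t))) (xt t))
    (hJfx : ∀ t, HasFDerivAt (fun y => f y (fun j => ut j t))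
      (LinearMap.toContinuousLinearMap (Matrix.toEuclideanLin (Jfx t))) (xt t))
    (hJφu : ∀ i t, HasFDerivAt
      (fun v => φ i (xt t) (Function.update (fun j => ut j t) i v))
      (LinearMap.toContinuousLinearMap (Matrix.toEuclideanLin (Jφu i t))) (ut i t))
    (hJfu : ∀ i t, HasFDerivAt
      (fun v => f (xt t) (Function.update (fun j => ut j t) i v))
      (LinearMap.toContinuousLinearMap (Matrix.toEuclideanLin (Jfu i t))) (ut i t))
    (hJφxc : ∀ i, Continuous (Jφx i)) (hJfxc : Continuous Jfx)
    (hJφuc : ∀ i, Continuous (Jφu i)) (hJfuc : ∀ i, Continuous (Jfu i))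
    -- block matrices Nᵢ(t), Bᵢ, Fᵢ(t)
    (Nq : (i : Fin N) → ℝ → Matrix (Fin (M i) ⊕ Fin n) (Fin n) ℝ)
    (hNq : ∀ i t, Nq i t = Matrix.fromRows (Jφx i t) (Jfx t))
    (B : (i : Fin N) → Matrix (Fin (M i) ⊕ Fin n) (Fin n) ℝ)
    (hB : ∀ i, B i = Matrix.fromRows 0 1)
    (F : (i : Fin N) → ℝ → Matrix (Fin n ⊕ Fin (m i)) (Fin (M i) ⊕ Fin n) ℝ)
    (hF : ∀ i t, F i t = Matrix.fromRows
      (Matrix.fromCols (Jφx i t)ᵀ (Jfx t)ᵀ)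
      (Matrix.fromCols (Jφu i t)ᵀ (Jfu i t)ᵀ))
    -- (b) C¹ solutions of the Riccati differential equation on [0,T] with Pᵢ(T) = 0
    (P : (i : Fin N) → ℝ → Matrix (Fin (M i) ⊕ Fin n) (Fin (M i) ⊕ Fin n) ℝ)
    (hP : ∀ i, ∀ t ∈ Icc (0:ℝ) T, ∀ a b, HasDerivWithinAt (fun s => P i s a b)
      (((P i t * B i + Nq i t) * (P i t * B i + Nq i t)ᵀ - (F i t)ᵀ * F i t) a b)
      (Icc (0:ℝ) T) t)
    (hPT : ∀ i, P i T = 0)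
    -- (c) for each i: either P̄ᵢ has full rank, or every kernel vector of P̄ᵢ has its first
    -- Mᵢ−1 components equal to zero (P̄ᵢ realized via extension by zero at the first index)
    (hrank : ∀ i,
      (∀ v : Fin (M i) ⊕ Fin n → ℝ, v (Sum.inl ⟨0, hM i⟩) = 0 →
        (∀ a, a ≠ Sum.inl ⟨0, hM i⟩ → (P i 0 *ᵥ v) a = 0) → v = 0) ∨
      (∀ v : Fin (M i) ⊕ Fin n → ℝ, v (Sum.inl ⟨0, hM i⟩) = 0 →
        (∀ a, a ≠ Sum.inl ⟨0, hM i⟩ → (P i 0 *ᵥ v) a = 0) →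
        ∀ j : Fin (M i), j ≠ ⟨0, hM i⟩ → v (Sum.inl j) = 0)) :
    -- conclusion
    ∀ (θh : (i : Fin N) → EuclideanSpace ℝ (Fin (M i))) (ψ0 : (i : Fin N) → Fin n → ℝ),
      (∀ i, Sum.elim (fun j => θh i j) (ψ0 i) (Sum.inl ⟨0, hM i⟩) = 1 ∧
        (∀ β : Fin (M i) ⊕ Fin n → ℝ, β (Sum.inl ⟨0, hM i⟩) = 1 →
          (Sum.elim (fun j => θh i j) (ψ0 i)) ⬝ᵥ
              ((P i 0) *ᵥ (Sum.elim (fun j => θh i j) (ψ0 i))) ≤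
            β ⬝ᵥ ((P i 0) *ᵥ β))) →
      -- every minimizer θ̂ᵢ is a positive multiple of θᵢ*
      (∀ i, ∃ c : ℝ, 0 < c ∧ ∀ j : Fin (M i), θh i j = c * θs i j) ∧
      -- and (x̃,ũ) is an OLNE of the game with running costs θ̂ᵢᵀφᵢ (zero trajectory error)
      (∀ i : Fin N, ∀ ui : ℝ → EuclideanSpace ℝ (Fin (m i)), Continuous ui →
        ∀ y : ℝ → EuclideanSpace ℝ (Fin n), ContDiff ℝ 1 y → y 0 = x₀ →
        (∀ t ∈ Icc (0:ℝ) T,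
          deriv y t = f (y t) (Function.update (fun j => ut j t) i (ui t))) →
        J i (θh i) xt ut ≤ J i (θh i) y (Function.update ut i ui)) :=
  statement_4_general n N m M hM T hT x₀ f φ J hJ H hH ut xt θs hθs1 hOLNE ψs hψs hstat hcostate Jφx
    Jfx Jφu Jfu hJφx hJfx hJφu hJfu hJφxc hJfxc Nq hNq B hB F hF P hP hPT hrank
end
end

section
/- Let P ∈ ℝ^{(M+n)×(M+n)} be symmetric positive semidefinite and let P̄ ∈ ℝ^{(M+n−1)×(M+n−1)} be P with its first row and first column deleted. Suppose every v ∈ ℝ^{M+n−1} with P̄v = 0 has its first M−1 components equal to zero. Then any two minimizers α, α' of the quadratic form α ↦ αᵀPα over the affine set {α : α₁ = 1} agree in their first M components. -/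
/-!
A minimizer `α` of the symmetric quadratic form `x ↦ xᵀPx` on the hyperplane `{x | x z = 1}` is
a critical point along every direction `e_j` with `j ≠ z`, so `(Pα)_j = 0` for those `j`. Hence
`α - α'` vanishes at `z` and lies in the kernel of `P̄`, and the kernel hypothesis forces its
first `M` components to vanish.
-/

open Matrix

section

variable {ι R : Type*} [Fintype ι]

theorem Matrix.IsSymm.dotProduct_mulVec_comm [CommSemiring R] {A : Matrix ι ι R} (hA : A.IsSymm)
    (v w : ι → R) : v ⬝ᵥ (A *ᵥ w) = w ⬝ᵥ (A *ᵥ v) := by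
  rw [dotProduct_mulVec, ← mulVec_transpose, hA.eq, dotProduct_comm]

theorem Matrix.IsSymm.dotProduct_mulVec_add_smul [CommRing R] {A : Matrix ι ι R} (hA : A.IsSymm)
    (v u : ι → R) (t : R) :
    (v + t • u) ⬝ᵥ (A *ᵥ (v + t • u)) =
      v ⬝ᵥ (A *ᵥ v) + 2 * (u ⬝ᵥ (A *ᵥ v)) * t + u ⬝ᵥ (A *ᵥ u) * (t * t) := by
  simp only [mulVec_add, mulVec_smul, add_dotProduct, dotProduct_add, smul_dotProduct,
    dotProduct_smul, smul_eq_mul, hA.dotProduct_mulVec_comm v u]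
  ring

theorem Matrix.IsSymm.dotProduct_mulVec_eq_zero_of_forall_le {A : Matrix ι ι ℝ} (hA : A.IsSymm)
    {v u : ι → ℝ} (hmin : ∀ t : ℝ, v ⬝ᵥ (A *ᵥ v) ≤ (v + t • u) ⬝ᵥ (A *ᵥ (v + t • u))) :
    u ⬝ᵥ (A *ᵥ v) = 0 := by
  have hdiscrim : discrim (u ⬝ᵥ (A *ᵥ u)) (2 * (u ⬝ᵥ (A *ᵥ v))) 0 ≤ 0 :=
    discrim_le_zero fun t ↦ by linarith [hA.dotProduct_mulVec_add_smul v u t ▸ hmin t]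
  rw [discrim] at hdiscrim
  nlinarith [sq_nonneg (u ⬝ᵥ (A *ᵥ v))]

theorem Matrix.IsSymm.mulVec_apply_eq_zero_of_isMinOn [DecidableEq ι] {A : Matrix ι ι ℝ}
    (hA : A.IsSymm) {z : ι} {v : ι → ℝ}
    (hmin : IsMinOn (fun w ↦ w ⬝ᵥ (A *ᵥ w)) {w | w z = v z} v) {j : ι} (hj : j ≠ z) :
    (A *ᵥ v) j = 0 := by
  have := hA.dotProduct_mulVec_eq_zero_of_forall_le (u := Pi.single j 1) fun t ↦
    isMinOn_iff.mp hmin _ (by simp [Pi.single_eq_of_ne' hj])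
  rwa [single_one_dotProduct] at this

end

theorem statement_6
    (M n : ℕ)
    (P : Matrix (Fin (M + n)) (Fin (M + n)) ℝ) (hP : P.PosSemidef)
    -- the first index
    (z : Fin (M + n))
    -- kernel condition on P̄ (first row/column of P deleted)
    (hker : ∀ v : Fin (M + n) → ℝ, v z = 0 → (∀ j, j ≠ z → (P *ᵥ v) j = 0) →
      ∀ j : Fin (M + n), (j : ℕ) < M → j ≠ z → v j = 0)
    -- two minimizers over the affine set {α : α₁ = 1}
    (α α' : Fin (M + n) → ℝ) (hα : α z = 1) (hα' : α' z = 1)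
    (hmin : ∀ β : Fin (M + n) → ℝ, β z = 1 → α ⬝ᵥ (P *ᵥ α) ≤ β ⬝ᵥ (P *ᵥ β))
    (hmin' : ∀ β : Fin (M + n) → ℝ, β z = 1 → α' ⬝ᵥ (P *ᵥ α') ≤ β ⬝ᵥ (P *ᵥ β)) :
    ∀ j : Fin (M + n), (j : ℕ) < M → α j = α' j := by
  have hsymm : P.IsSymm := isHermitian_iff_isSymm.mp hP.isHermitian
  have hcrit : ∀ i, i ≠ z → (P *ᵥ (α - α')) i = 0 := fun i hi ↦ by
    rw [mulVec_sub, Pi.sub_apply,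
      hsymm.mulVec_apply_eq_zero_of_isMinOn (fun β hβ ↦ hmin β (hβ.trans hα)) hi,
      hsymm.mulVec_apply_eq_zero_of_isMinOn (fun β hβ ↦ hmin' β (hβ.trans hα')) hi, sub_zero]
  intro j hjM
  by_cases hjz : j = z
  · rw [hjz, hα, hα']
  · exact sub_eq_zero.mp (hker (α - α') (by simp [hα, hα']) hcrit j hjM hjz)
end
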